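/- arXiv:2007.00568 — 2 statements merged into one kernel-verified Lean document; each statement's English description precedes it below -/
import Mathlib

section
/- Let P be a Borel probability measure on Euclidean space ℝ^k, and let θ⋆ be a spatial median of P (a global minimizer of f_P) with P({θ⋆}) = 0. Then the expected spatial sign vanishes at θ⋆: ∫ U(y − θ⋆) dP(y) = 0, where U(z) = z/‖z‖₂ for z ≠ 0 and U(0) = 0. -/
/-! The function `t ↦ f_μ (θ + t • v)` is differentiable at `0` with derivative
`-∫ ⟪U (y - θ), v⟫ dμ`: the integrand `t ↦ ‖y - θ - t • v‖` is `‖v‖`-Lipschitz, and it is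
differentiable at `0` for every `y ≠ θ`, hence `μ`-almost everywhere because `μ {θ} = 0`.
At a minimiser this derivative vanishes for every direction `v`, so the vector integral
`∫ U (y - θ) dμ` is orthogonal to everything. -/

open MeasureTheory

/-- The spatial sign function: `U z = z / ‖z‖` for `z ≠ 0`, and `U 0 = 0`
(note `‖0‖⁻¹ • 0 = 0`). -/
noncomputable def spatialSign {k : ℕ} (z : EuclideanSpace ℝ (Fin k)) :
    EuclideanSpace ℝ (Fin k) := ‖z‖⁻¹ • z

open Filter Topology
open scoped RealInnerProductSpace

variable {E : Type*} [NormedAddCommGroup E]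

theorem lipschitzWith_norm_sub_add_smul [NormedSpace ℝ E] (y θ v : E) :
    LipschitzWith ‖v‖₊ (fun t : ℝ => ‖y - (θ + t • v)‖) := by
  refine LipschitzWith.of_dist_le_mul fun s t => ?_
  calc dist ‖y - (θ + s • v)‖ ‖y - (θ + t • v)‖ ≤ ‖(y - (θ + s • v)) - (y - (θ + t • v))‖ :=
        dist_norm_norm_le _ _
    _ = ‖(t - s) • v‖ := by rw [sub_smul]; congr 1; abel
    _ = ‖v‖ * dist s t := by rw [norm_smul, Real.dist_eq, Real.norm_eq_abs, abs_sub_comm, mul_comm]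

-- Subtracting `‖y‖` keeps the integrand bounded by `‖θ‖`, so no moment assumption is needed.
noncomputable def spatialMedianObjective [MeasurableSpace E] (μ : Measure E) (θ : E) : ℝ :=
  ∫ y, (‖y - θ‖ - ‖y‖) ∂μ

theorem integrable_norm_sub_sub_norm [MeasurableSpace E] [OpensMeasurableSpace E]
    (μ : Measure E) [IsFiniteMeasure μ] (θ : E) :
    Integrable (fun y => ‖y - θ‖ - ‖y‖) μ := by
  refine Integrable.of_bound (by fun_prop) ‖θ‖ (ae_of_all _ fun y => ?_)
  simpa using abs_norm_sub_norm_le (y - θ) y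

variable [InnerProductSpace ℝ E]

theorem HasDerivAt.norm {f : ℝ → E} {f' : E} {x : ℝ} (hf : HasDerivAt f f' x) (h0 : f x ≠ 0) :
    HasDerivAt (fun t => ‖f t‖) ⟪‖f x‖⁻¹ • f x, f'⟫ x := by
  have h := hf.norm_sq.sqrt (by positivity)
  simp only [Real.sqrt_sq (norm_nonneg _)] at h
  convert h using 1
  rw [real_inner_smul_left]
  field_simp

theorem hasDerivAt_norm_sub_add_smul {y θ : E} (v : E) (hy : y ≠ θ) :
    HasDerivAt (fun t : ℝ => ‖y - (θ + t • v)‖) (-⟪‖y - θ‖⁻¹ • (y - θ), v⟫) 0 := by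
  have hline : HasDerivAt (fun t : ℝ => y - (θ + t • v)) (-v) 0 := by
    simpa using (((hasDerivAt_id (0 : ℝ)).smul_const v).const_add θ).const_sub y
  simpa [inner_neg_right] using hline.norm (by simpa using sub_ne_zero.mpr hy)

section Measure

variable [MeasurableSpace E] [OpensMeasurableSpace E]

theorem hasDerivAt_spatialMedianObjective_add_smul (μ : Measure E) [IsFiniteMeasure μ]
    {θ : E} (hθ : μ {θ} = 0) (v : E) :
    HasDerivAt (fun t : ℝ => spatialMedianObjective μ (θ + t • v))
      (∫ y, -⟪‖y - θ‖⁻¹ • (y - θ), v⟫ ∂μ) 0 := by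
  have hne : ∀ᵐ y ∂μ, y ≠ θ := measure_eq_zero_iff_ae_notMem.mp hθ
  have hmeas : AEStronglyMeasurable (fun y => -⟪‖y - θ‖⁻¹ • (y - θ), v⟫) μ := by
    simp only [real_inner_smul_left]
    exact ((Continuous.measurable (by fun_prop)).inv.mul
      (Continuous.measurable (by fun_prop))).neg.aestronglyMeasurable
  refine (hasDerivAt_integral_of_dominated_loc_of_lip (bound := fun _ => ‖v‖) univ_mem
    (Eventually.of_forall fun t => by fun_prop) (by simpa using integrable_norm_sub_sub_norm μ θ)
    hmeas (ae_of_all _ fun y => ?_) (integrable_const _) ?_).2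
  · simpa [Real.nnabs_of_nonneg (norm_nonneg v)] using
      (lipschitzWith_norm_sub_add_smul y θ v).sub (LipschitzWith.const ‖y‖)
  · filter_upwards [hne] with y hy
    exact (hasDerivAt_norm_sub_add_smul v hy).sub_const _

theorem integral_inner_inv_norm_smul_sub_eq_zero_of_isLocalMin (μ : Measure E)
    [IsFiniteMeasure μ] {θ : E} (hθ : μ {θ} = 0) (hmin : IsLocalMin (spatialMedianObjective μ) θ)
    (v : E) : ∫ y, ⟪‖y - θ‖⁻¹ • (y - θ), v⟫ ∂μ = 0 := by
  have hline : IsLocalMin (fun t : ℝ => spatialMedianObjective μ (θ + t • v)) 0 := by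
    have hθ0 : θ + (0 : ℝ) • v = θ := by simp
    exact (hθ0 ▸ hmin).comp_continuous (g := fun t : ℝ => θ + t • v) (by fun_prop)
  have := hline.hasDerivAt_eq_zero (hasDerivAt_spatialMedianObjective_add_smul μ hθ v)
  rwa [integral_neg, neg_eq_zero] at this

end Measure

theorem integral_inv_norm_smul_sub_eq_zero_of_isLocalMin [CompleteSpace E] [MeasurableSpace E]
    [BorelSpace E] [SecondCountableTopology E] (μ : Measure E) [IsFiniteMeasure μ] {θ : E}
    (hθ : μ {θ} = 0) (hmin : IsLocalMin (spatialMedianObjective μ) θ) :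
    ∫ y, ‖y - θ‖⁻¹ • (y - θ) ∂μ = 0 := by
  refine integral_eq_zero_of_forall_integral_inner_eq_zero ℝ _ ?_ fun c => ?_
  · refine Integrable.of_bound (by fun_prop) 1 (ae_of_all _ fun y => ?_)
    rw [norm_smul, norm_inv, norm_norm]
    exact inv_mul_le_one_of_le₀ le_rfl (norm_nonneg _)
  · simpa only [real_inner_comm c] using
      integral_inner_inv_norm_smul_sub_eq_zero_of_isLocalMin μ hθ hmin c

theorem expected_spatial_sign_vanishes_at_median
    (k : ℕ) (P : Measure (EuclideanSpace ℝ (Fin k))) [IsProbabilityMeasure P]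
    (θstar : EuclideanSpace ℝ (Fin k)) (hθstar : P {θstar} = 0)
    (hmin : ∀ θ : EuclideanSpace ℝ (Fin k),
      (∫ y, (‖y - θstar‖ - ‖y‖) ∂P) ≤ ∫ y, (‖y - θ‖ - ‖y‖) ∂P) :
    ∫ y, spatialSign (y - θstar) ∂P = 0 :=
  integral_inv_norm_smul_sub_eq_zero_of_isLocalMin P hθstar (Eventually.of_forall hmin)
end

section
/- Let P be a Borel probability measure on Euclidean space ℝ^k and θ ∈ ℝ^k, and suppose that P({θ}) = 0, that ∫ ‖y − θ‖₂⁻¹ dP(y) < ∞, and that no line through θ carries full P-mass, i.e., for every unit vector v ∈ ℝ^k one has P({θ + t·v : t ∈ ℝ}) < 1. Then the matrix V_{θ,P} = ∫ ‖y − θ‖₂⁻¹ (I_k − U(y − θ) U(y − θ)ᵀ) dP(y) is positive definite: for every nonzero h ∈ ℝ^k, ∫ (‖h‖₂² − ⟨U(y − θ), h⟩²)/‖y − θ‖₂ dP(y) > 0. -/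
open MeasureTheory RealInnerProductSpace

/-! The integrand is nonnegative by Cauchy–Schwarz, as `‖U z‖ ≤ 1`. By the equality case of
Cauchy–Schwarz it vanishes at `y` only when `y - θ` is parallel to `h`, i.e. only on the line
through `θ` in direction `h`. That line has `P`-mass `< 1`, so the integrand is positive on a set
of positive measure. -/

theorem integral_pos_of_nonneg_of_preimage_zero_subset {α : Type*} [MeasurableSpace α]
    {μ : Measure α} {f : α → ℝ} {s : Set α} (hf : 0 ≤ f) (hfi : Integrable f μ)
    (hs : μ s < μ Set.univ) (hzero : f ⁻¹' {0} ⊆ s) :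
    0 < ∫ x, f x ∂μ := by
  rw [integral_pos_iff_support_of_nonneg hf hfi]
  have hcompl : sᶜ ⊆ Function.support f := fun x hx hfx => hx (hzero hfx)
  refine lt_of_lt_of_le (pos_iff_ne_zero.mpr fun h0 => ?_) (measure_mono hcompl)
  have huniv := measure_univ_le_add_compl (μ := μ) s
  rw [h0, add_zero] at huniv
  exact hs.not_ge huniv

section SpatialSign

variable {k : ℕ}

theorem measurable_spatialSign : Measurable (spatialSign (k := k)) :=
  measurable_id.norm.inv.smul measurable_id

theorem norm_spatialSign_le (z : EuclideanSpace ℝ (Fin k)) : ‖spatialSign z‖ ≤ 1 := by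
  rw [spatialSign, norm_smul, norm_inv, norm_norm]
  exact inv_mul_le_one_of_le₀ le_rfl (norm_nonneg z)

theorem inner_spatialSign_sq_le (z h : EuclideanSpace ℝ (Fin k)) :
    ⟪spatialSign z, h⟫ ^ 2 ≤ ‖h‖ ^ 2 := by
  rw [sq_le_sq, abs_norm]
  exact (abs_real_inner_le_norm _ h).trans
    (mul_le_of_le_one_left (norm_nonneg h) (norm_spatialSign_le z))

theorem inner_eq_norm_mul_inner_spatialSign (z h : EuclideanSpace ℝ (Fin k)) :
    ⟪z, h⟫ = ‖z‖ * ⟪spatialSign z, h⟫ := by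
  rcases eq_or_ne z 0 with rfl | hz
  · simp
  · rw [spatialSign, real_inner_smul_left, mul_inv_cancel_left₀ (norm_ne_zero_iff.mpr hz)]

theorem exists_eq_smul_of_inner_spatialSign_sq_eq {z h : EuclideanSpace ℝ (Fin k)}
    (hh : h ≠ 0) (heq : ⟪spatialSign z, h⟫ ^ 2 = ‖h‖ ^ 2) : ∃ r : ℝ, z = r • h := by
  have habs : |⟪spatialSign z, h⟫| = ‖h‖ := by
    rw [← abs_norm h]; exact sq_eq_sq_iff_abs_eq_abs _ _ |>.mp heq
  have hCS : ‖⟪h, z⟫‖ = ‖h‖ * ‖z‖ := by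
    rw [real_inner_comm, inner_eq_norm_mul_inner_spatialSign, Real.norm_eq_abs, abs_mul,
      abs_norm, habs, mul_comm]
  have hcases : h = 0 ∨ ∃ r : ℝ, z = r • h := ((norm_inner_eq_norm_tfae ℝ h z).out 0 2).mp hCS
  exact hcases.resolve_left hh

theorem integrable_sub_inner_spatialSign_sq_div_norm {P : Measure (EuclideanSpace ℝ (Fin k))}
    {θ : EuclideanSpace ℝ (Fin k)} (hint : Integrable (fun y => ‖y - θ‖⁻¹) P)
    (h : EuclideanSpace ℝ (Fin k)) :
    Integrable (fun y => (‖h‖ ^ 2 - ⟪spatialSign (y - θ), h⟫ ^ 2) / ‖y - θ‖) P := by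
  refine (hint.const_mul (‖h‖ ^ 2)).mono ?_ (Filter.Eventually.of_forall fun y => ?_)
  · have hsub : Measurable fun y : EuclideanSpace ℝ (Fin k) => y - θ := by fun_prop
    exact (((measurable_spatialSign.comp hsub).inner measurable_const).pow_const 2
      |>.const_sub _ |>.div hsub.norm).aestronglyMeasurable
  · rw [Real.norm_eq_abs, Real.norm_eq_abs, abs_div, abs_norm, div_eq_mul_inv,
      abs_of_nonneg (sub_nonneg.mpr (inner_spatialSign_sq_le _ h)),
      abs_of_nonneg (mul_nonneg (sq_nonneg _) (inv_nonneg.mpr (norm_nonneg _)))]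
    gcongr
    exact sub_le_self _ (sq_nonneg _)

end SpatialSign

theorem V_matrix_positive_definite_general
    (k : ℕ) (P : Measure (EuclideanSpace ℝ (Fin k))) [IsProbabilityMeasure P]
    (θ : EuclideanSpace ℝ (Fin k))
    (hint : Integrable (fun y => ‖y - θ‖⁻¹) P)
    (hline : ∀ v : EuclideanSpace ℝ (Fin k), ‖v‖ = 1 →
      P {x | ∃ t : ℝ, x = θ + t • v} < 1) :
    ∀ h : EuclideanSpace ℝ (Fin k), h ≠ 0 →
      0 < ∫ y, (‖h‖^2 - ⟪spatialSign (y - θ), h⟫^2) / ‖y - θ‖ ∂P := by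
  intro h hh
  have hunit : ‖‖h‖⁻¹ • h‖ = 1 := by simpa using norm_smul_inv_norm (𝕜 := ℝ) hh
  refine integral_pos_of_nonneg_of_preimage_zero_subset
    (fun y => div_nonneg (sub_nonneg.mpr (inner_spatialSign_sq_le _ h)) (norm_nonneg _))
    (integrable_sub_inner_spatialSign_sq_div_norm hint h)
    ((hline _ hunit).trans_eq measure_univ.symm) fun y hy => ?_
  obtain ⟨r, hr⟩ : ∃ r : ℝ, y - θ = r • h := by
    rcases div_eq_zero_iff.mp hy with hnum | hnorm
    · exact exists_eq_smul_of_inner_spatialSign_sq_eq hh (sub_eq_zero.mp hnum).symm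
    · exact ⟨0, by rw [zero_smul, ← norm_eq_zero, hnorm]⟩
  refine ⟨r * ‖h‖, ?_⟩
  rw [mul_smul, smul_inv_smul₀ (norm_ne_zero_iff.mpr hh), ← hr, add_sub_cancel]

theorem V_matrix_positive_definite
    (k : ℕ) (P : Measure (EuclideanSpace ℝ (Fin k))) [IsProbabilityMeasure P]
    (θ : EuclideanSpace ℝ (Fin k))
    (hatom : P {θ} = 0)
    (hint : Integrable (fun y => ‖y - θ‖⁻¹) P)
    (hline : ∀ v : EuclideanSpace ℝ (Fin k), ‖v‖ = 1 →
      P {x | ∃ t : ℝ, x = θ + t • v} < 1) :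
    ∀ h : EuclideanSpace ℝ (Fin k), h ≠ 0 →
      0 < ∫ y, (‖h‖^2 - ⟪spatialSign (y - θ), h⟫^2) / ‖y - θ‖ ∂P :=
  V_matrix_positive_definite_general k P θ hint hline
end
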